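/- Let d ≥ 2, let P = (1/2)(1 − F) be the antisymmetric projector on ℂ^d ⊗ ℂ^d, and let γ_d = (2/(d(d−1)))·P be the totally antisymmetric state. For every α with 0 < α < 1 and every separable density matrix σ on ℂ^d ⊗ ℂ^d, one has Re Tr(γ_d^α · σ^{1−α}) ≤ (3/4)^{(1−α)/2}, where for a positive semidefinite matrix A and real t ≥ 0, A^t denotes the positive semidefinite t-th power obtained by applying x ↦ x^t to the eigenvalues (continuous functional calculus); in particular γ_d^α = (2/(d(d−1)))^α · P. Equivalently, the quantum Rényi divergence D_α(γ_d‖σ) = (1/(α−1))·log Tr(γ_d^α σ^{1−α}) is at least log √(4/3) for all 0 < α < 1. -/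

import Mathlib

open Matrix Kronecker ComplexOrder

/-- The swap matrix on `ℂ^d ⊗ ℂ^d`, with entries `F[(i,j),(k,l)] = δ_{il}·δ_{jk}`. -/
noncomputable def swapMat (d : ℕ) : Matrix (Fin d × Fin d) (Fin d × Fin d) ℂ :=
  fun p q => (if p.1 = q.2 then 1 else 0) * (if p.2 = q.1 then 1 else 0)

/-- The projector onto the antisymmetric subspace of `ℂ^d ⊗ ℂ^d`: `P = (1/2)(1 - F)`. -/
noncomputable def antiProj (d : ℕ) : Matrix (Fin d × Fin d) (Fin d × Fin d) ℂ :=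
  (1 / 2 : ℂ) • ((1 : Matrix (Fin d × Fin d) (Fin d × Fin d) ℂ) - swapMat d)

/-- A density matrix: positive semidefinite with trace 1. -/
def IsDensityMatrix {ι : Type} [Fintype ι] [DecidableEq ι] (ρ : Matrix ι ι ℂ) : Prop :=
  ρ.PosSemidef ∧ ρ.trace = 1

/-- A separable state on a bipartite system `ι ⊗ ι`: a finite convex combination of
Kronecker products of density matrices. -/
def IsSeparableState {ι : Type} [Fintype ι] [DecidableEq ι]
    (σ : Matrix (ι × ι) (ι × ι) ℂ) : Prop :=
  ∃ (m : ℕ) (p : Fin m → ℝ) (ρ τ : Fin m → Matrix ι ι ℂ),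
    (∀ j, 0 ≤ p j) ∧ (∑ j, p j = 1) ∧
    (∀ j, IsDensityMatrix (ρ j)) ∧ (∀ j, IsDensityMatrix (τ j)) ∧
    σ = ∑ j, (p j : ℂ) • (ρ j ⊗ₖ τ j)

/-- The totally antisymmetric state `γ_d = (2/(d(d−1)))·P`. -/
noncomputable def gammaState (d : ℕ) : Matrix (Fin d × Fin d) (Fin d × Fin d) ℂ :=
  (2 / ((d : ℂ) * ((d : ℂ) - 1))) • antiProj d

/-- The `t`-th power of a positive semidefinite Hermitian matrix, obtained by raising
each eigenvalue to the real power `t` in the spectral decomposition (and `0` on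
non-Hermitian input). -/
noncomputable def matPow {ι : Type} [Fintype ι] [DecidableEq ι]
    (A : Matrix ι ι ℂ) (t : ℝ) : Matrix ι ι ℂ :=
  if hA : A.IsHermitian then
    (hA.eigenvectorUnitary : Matrix ι ι ℂ) *
      Matrix.diagonal (fun i => ((hA.eigenvalues i ^ t : ℝ) : ℂ)) *
      star (hA.eigenvectorUnitary : Matrix ι ι ℂ)
  else 0

/-!
`γ_d` is `c • P` with `c = 2/(d(d-1))` and `P` a projector of rank `r = 1/c`, so
`γ_d^α = c^α • P`. In an eigenbasis of `σ`, `Re Tr(P σ^q) = ∑ wᵢ μᵢ^q` with weights `wᵢ ≥ 0`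
summing to `r`, and Hölder's inequality gives `Re Tr(P σ^q) ≤ r^(1-q) (Re Tr(P σ))^q`; with
`q = 1 - α` the factors `c^α r^α` cancel. For a product state `Tr(P (ρ ⊗ τ)) = (1 - Tr(ρτ))/2`
and `Tr(ρτ) ≥ 0`, so `Re Tr(P σ) ≤ 1/2` for separable `σ`; finally `(1/2)^q ≤ (3/4)^(q/2)`.
-/

section MatPow

variable {ι : Type} [Fintype ι] [DecidableEq ι]

lemma matPow_of_isHermitian {A : Matrix ι ι ℂ} (hA : A.IsHermitian) (t : ℝ) :
    matPow A t = (hA.eigenvectorUnitary : Matrix ι ι ℂ) *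
      diagonal (fun i => ((hA.eigenvalues i ^ t : ℝ) : ℂ)) *
      star (hA.eigenvectorUnitary : Matrix ι ι ℂ) :=
  dif_pos hA

lemma matPow_zero {A : Matrix ι ι ℂ} (hA : A.IsHermitian) : matPow A 0 = 1 := by
  simp [matPow_of_isHermitian hA]

lemma matPow_one {A : Matrix ι ι ℂ} (hA : A.IsHermitian) : matPow A 1 = A := by
  conv_rhs => rw [hA.spectral_theorem]
  simp [matPow_of_isHermitian hA, Function.comp_def]

lemma re_trace_mul_matPow {A : Matrix ι ι ℂ} (hA : A.IsHermitian) (M : Matrix ι ι ℂ) (t : ℝ) :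
    (M * matPow A t).trace.re =
      ∑ i, ((star (hA.eigenvectorUnitary : Matrix ι ι ℂ) * M * hA.eigenvectorUnitary) i i).re *
        hA.eigenvalues i ^ t := by
  rw [matPow_of_isHermitian hA, ← Matrix.mul_assoc, Matrix.trace_mul_cycle, ← Matrix.mul_assoc,
    Matrix.trace, Complex.re_sum]
  simp [Matrix.mul_diagonal]

lemma Matrix.IsHermitian.eigenvalues_eq_zero_or_eq_of_mul_self_eq_smul {A : Matrix ι ι ℂ}
    (hA : A.IsHermitian) {c : ℝ} (hAA : A * A = (c : ℂ) • A) (i : ι) :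
    hA.eigenvalues i = 0 ∨ hA.eigenvalues i = c := by
  have hv : ⇑(hA.eigenvectorBasis i) ≠ 0 := by
    simpa using hA.eigenvectorBasis.orthonormal.ne_zero i
  have h : (hA.eigenvalues i * hA.eigenvalues i) • ⇑(hA.eigenvectorBasis i) =
      (c * hA.eigenvalues i) • ⇑(hA.eigenvectorBasis i) := by
    calc _ = (A * A) *ᵥ ⇑(hA.eigenvectorBasis i) := by
          rw [← Matrix.mulVec_mulVec, hA.mulVec_eigenvectorBasis, Matrix.mulVec_smul,
            hA.mulVec_eigenvectorBasis, smul_smul]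
      _ = _ := by
          rw [hAA, Matrix.smul_mulVec, hA.mulVec_eigenvectorBasis, Complex.coe_smul, smul_smul]
  have hμ := smul_left_injective ℝ hv h
  rcases mul_eq_zero.mp (show hA.eigenvalues i * (hA.eigenvalues i - c) = 0 by
    linear_combination hμ) with h0 | hc
  · exact .inl h0
  · exact .inr (sub_eq_zero.mp hc)

lemma matPow_of_mul_self_eq_smul {A : Matrix ι ι ℂ} (hA : A.IsHermitian) {c : ℝ}
    (hAA : A * A = (c : ℂ) • A) {α : ℝ} (hα : α ≠ 0) :
    matPow A α = ((c ^ (α - 1) : ℝ) : ℂ) • A := by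
  have hpow : ∀ i, hA.eigenvalues i ^ α = c ^ (α - 1) * hA.eigenvalues i := fun i => by
    rcases hA.eigenvalues_eq_zero_or_eq_of_mul_self_eq_smul hAA i with h | h <;> rw [h]
    · rw [Real.zero_rpow hα, mul_zero]
    · by_cases hc : c = 0
      · rw [hc, Real.zero_rpow hα, mul_zero]
      · rw [Real.rpow_sub_one hc, div_mul_cancel₀ _ hc]
  have hdiag : diagonal (fun i => ((hA.eigenvalues i ^ α : ℝ) : ℂ)) =
      ((c ^ (α - 1) : ℝ) : ℂ) • diagonal (RCLike.ofReal ∘ hA.eigenvalues) := by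
    simp [hpow, ← Matrix.diagonal_smul, Function.comp_def]
  conv_rhs => rw [hA.spectral_theorem]
  rw [matPow_of_isHermitian hA, hdiag, Matrix.mul_smul, Matrix.smul_mul]
  rfl

lemma re_trace_mul_matPow_le {P σ : Matrix ι ι ℂ} (hP : P.PosSemidef) (hσ : σ.PosSemidef)
    {q : ℝ} (hq0 : 0 < q) (hq1 : q ≤ 1) :
    (P * matPow σ q).trace.re ≤ P.trace.re ^ (1 - q) * (P * σ).trace.re ^ q := by
  set U := (hσ.1.eigenvectorUnitary : Matrix ι ι ℂ)
  set μ := hσ.1.eigenvalues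
  set w : ι → ℝ := fun i => ((star U * P * U) i i).re
  have hw : ∀ i, 0 ≤ w i := fun i =>
    (Complex.nonneg_iff.mp ((hP.conjTranspose_mul_mul_same U).diag_nonneg (i := i))).1
  have hμq : ∀ i, 0 ≤ μ i ^ q := fun i => Real.rpow_nonneg (hσ.eigenvalues_nonneg i) q
  have htr : ∀ t, (P * matPow σ t).trace.re = ∑ i, w i * μ i ^ t := re_trace_mul_matPow hσ.1 P
  have hPtr : P.trace.re = ∑ i, w i := by simpa [matPow_zero hσ.1] using htr 0
  have hPσ : (P * σ).trace.re = ∑ i, w i * (μ i ^ q) ^ q⁻¹ := by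
    have hinv (i : ι) : (μ i ^ q) ^ q⁻¹ = μ i :=
      Real.rpow_rpow_inv (hσ.eigenvalues_nonneg i) hq0.ne'
    simp only [hinv]
    simpa [matPow_one hσ.1] using htr 1
  rw [htr, hPtr, hPσ]
  simpa using Real.inner_le_weight_mul_Lp_of_nonneg Finset.univ (one_le_inv₀ hq0 |>.mpr hq1) w
    (fun i => μ i ^ q) hw hμq

lemma Matrix.PosSemidef.trace_mul_nonneg {A B : Matrix ι ι ℂ}
    (hA : A.PosSemidef) (hB : B.PosSemidef) : 0 ≤ (A * B).trace := by
  open scoped MatrixOrder in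
  obtain ⟨C, rfl⟩ := CStarAlgebra.nonneg_iff_eq_star_mul_self.mp hA.nonneg
  rw [star_eq_conjTranspose, Matrix.mul_assoc, trace_mul_comm]
  exact (hB.mul_mul_conjTranspose_same C).trace_nonneg

end MatPow

lemma swapMat_conjTranspose (d : ℕ) : (swapMat d)ᴴ = swapMat d := by
  ext ⟨i, j⟩ ⟨k, l⟩
  simp [swapMat, conjTranspose_apply, apply_ite (starRingEnd ℂ), eq_comm, mul_comm]

lemma swapMat_mul_self (d : ℕ) : swapMat d * swapMat d = 1 := by
  ext ⟨i, j⟩ ⟨k, l⟩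
  simp only [mul_apply, swapMat, mul_ite, mul_one, mul_zero, eq_comm, Fintype.sum_prod_type,
    Finset.sum_ite_eq, Finset.mem_univ, ↓reduceIte, one_apply, Prod.mk.injEq, ite_and]
  simp only [← ite_and, and_comm]

lemma trace_swapMat_mul_kronecker {d : ℕ} (ρ τ : Matrix (Fin d) (Fin d) ℂ) :
    (swapMat d * (ρ ⊗ₖ τ)).trace = (ρ * τ).trace := by
  simp only [trace, diag, mul_apply, swapMat, kroneckerMap_apply, Fintype.sum_prod_type,
    ite_mul, one_mul, zero_mul, Finset.sum_ite_eq, Finset.mem_univ, if_true]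
  rw [Finset.sum_comm]

lemma trace_swapMat (d : ℕ) : (swapMat d).trace = d := by
  simpa [one_kronecker_one] using trace_swapMat_mul_kronecker (1 : Matrix (Fin d) (Fin d) ℂ) 1

lemma antiProj_isHermitian (d : ℕ) : (antiProj d).IsHermitian := by
  simp [IsHermitian, antiProj, conjTranspose_smul, swapMat_conjTranspose]

lemma antiProj_mul_self (d : ℕ) : antiProj d * antiProj d = antiProj d := by
  have h : (1 - swapMat d) * (1 - swapMat d) = (2 : ℂ) • (1 - swapMat d) := by
    rw [sub_mul, mul_sub, mul_sub, swapMat_mul_self, two_smul, one_mul, mul_one, one_mul]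
    abel
  rw [antiProj, Matrix.smul_mul, Matrix.mul_smul, h, smul_smul, smul_smul]
  norm_num

lemma antiProj_posSemidef (d : ℕ) : (antiProj d).PosSemidef := by
  simpa [(antiProj_isHermitian d).eq, antiProj_mul_self] using
    posSemidef_conjTranspose_mul_self (antiProj d)

lemma re_trace_antiProj (d : ℕ) : (antiProj d).trace.re = d * (d - 1) / 2 := by
  have : (antiProj d).trace = ((d * (d - 1) / 2 : ℝ) : ℂ) := by
    rw [antiProj, trace_smul, trace_sub, trace_one, trace_swapMat, Fintype.card_prod,
      Fintype.card_fin, smul_eq_mul]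
    push_cast
    ring
  rw [this, Complex.ofReal_re]

lemma trace_antiProj_mul_kronecker {d : ℕ} {ρ τ : Matrix (Fin d) (Fin d) ℂ}
    (hρ : ρ.trace = 1) (hτ : τ.trace = 1) :
    (antiProj d * (ρ ⊗ₖ τ)).trace = (1 - (ρ * τ).trace) / 2 := by
  rw [antiProj, Matrix.smul_mul, trace_smul, Matrix.sub_mul, Matrix.one_mul, trace_sub,
    trace_swapMat_mul_kronecker, trace_kronecker, hρ, hτ, smul_eq_mul]
  ring

lemma re_trace_antiProj_mul_kronecker_le {d : ℕ} {ρ τ : Matrix (Fin d) (Fin d) ℂ}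
    (hρ : IsDensityMatrix ρ) (hτ : IsDensityMatrix τ) :
    (antiProj d * (ρ ⊗ₖ τ)).trace.re ≤ 1 / 2 := by
  have := (Complex.nonneg_iff.mp (hρ.1.trace_mul_nonneg hτ.1)).1
  rw [trace_antiProj_mul_kronecker hρ.2 hτ.2, Complex.div_ofNat_re, Complex.sub_re,
    Complex.one_re]
  linarith

lemma re_trace_antiProj_mul_le_of_isSeparableState {d : ℕ}
    {σ : Matrix (Fin d × Fin d) (Fin d × Fin d) ℂ} (hσ : IsSeparableState σ) :
    (antiProj d * σ).trace.re ≤ 1 / 2 := by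
  obtain ⟨m, p, ρ, τ, hp0, hp1, hρ, hτ, rfl⟩ := hσ
  calc (antiProj d * ∑ j, (p j : ℂ) • (ρ j ⊗ₖ τ j)).trace.re
      = ∑ j, p j * (antiProj d * (ρ j ⊗ₖ τ j)).trace.re := by
        simp [Matrix.mul_sum, trace_sum, Complex.re_sum]
    _ ≤ ∑ j, p j * (1 / 2) := by
        gcongr with j
        · exact hp0 j
        · exact re_trace_antiProj_mul_kronecker_le (hρ j) (hτ j)
    _ = 1 / 2 := by rw [← Finset.sum_mul, hp1, one_mul]

lemma gammaState_eq_smul (d : ℕ) :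
    gammaState d = ((2 / (d * (d - 1)) : ℝ) : ℂ) • antiProj d := by
  rw [gammaState]
  push_cast
  rfl

lemma gammaState_isHermitian (d : ℕ) : (gammaState d).IsHermitian := by
  rw [gammaState_eq_smul]
  exact (antiProj_isHermitian d).smul (Complex.conj_ofReal _)

lemma gammaState_mul_self (d : ℕ) :
    gammaState d * gammaState d = ((2 / (d * (d - 1)) : ℝ) : ℂ) • gammaState d := by
  rw [gammaState_eq_smul, Matrix.smul_mul, Matrix.mul_smul, antiProj_mul_self]

lemma two_div_mul_sub_one_pos {d : ℕ} (hd : 2 ≤ d) : 0 < (2 / (d * (d - 1)) : ℝ) := by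
  have : (2 : ℝ) ≤ d := by exact_mod_cast hd
  have : (0 : ℝ) < d * (d - 1) := by nlinarith
  positivity

lemma matPow_gammaState {d : ℕ} (hd : 2 ≤ d) {α : ℝ} (hα : α ≠ 0) :
    matPow (gammaState d) α = (((2 / (d * (d - 1))) ^ α : ℝ) : ℂ) • antiProj d := by
  have hc := (two_div_mul_sub_one_pos hd).ne'
  rw [matPow_of_mul_self_eq_smul (gammaState_isHermitian d) (gammaState_mul_self d) hα,
    gammaState_eq_smul, smul_smul, ← Complex.ofReal_mul, Real.rpow_sub_one hc,
    div_mul_cancel₀ _ hc]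

lemma half_rpow_le_three_quarters_rpow_half {t : ℝ} (ht : 0 ≤ t) :
    (1 / 2 : ℝ) ^ t ≤ (3 / 4 : ℝ) ^ (t / 2) := by
  calc (1 / 2 : ℝ) ^ t = ((1 / 2 : ℝ) ^ (2 : ℝ)) ^ (t / 2) := by
        rw [← Real.rpow_mul (by norm_num)]
        ring_nf
    _ ≤ (3 / 4 : ℝ) ^ (t / 2) := by
        gcongr
        norm_num

/-- For all `0 < α < 1` and every separable density matrix `σ` on `ℂ^d ⊗ ℂ^d` (`d ≥ 2`),
`Re Tr(γ_d^α · σ^{1−α}) ≤ (3/4)^{(1−α)/2}`; equivalently, the Rényi divergence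
`D_α(γ_d‖σ)` is at least `log √(4/3)`. -/
theorem renyi_overlap_antisymmetric_le (d : ℕ) (hd : 2 ≤ d)
    (α : ℝ) (hα0 : 0 < α) (hα1 : α < 1)
    (σ : Matrix (Fin d × Fin d) (Fin d × Fin d) ℂ)
    (hσ : IsDensityMatrix σ) (hsep : IsSeparableState σ) :
    ((matPow (gammaState d) α * matPow σ (1 - α)).trace).re
      ≤ (3 / 4 : ℝ) ^ ((1 - α) / 2) := by
  set c : ℝ := 2 / (d * (d - 1))
  set s := (antiProj d * σ).trace.re
  have hc : 0 < c := two_div_mul_sub_one_pos hd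
  have hrank : (antiProj d).trace.re = c⁻¹ := by
    rw [re_trace_antiProj]
    simp [c]
  have hs : 0 ≤ s := (Complex.nonneg_iff.mp ((antiProj_posSemidef d).trace_mul_nonneg hσ.1)).1
  calc ((matPow (gammaState d) α * matPow σ (1 - α)).trace).re
      = c ^ α * (antiProj d * matPow σ (1 - α)).trace.re := by
        rw [matPow_gammaState hd hα0.ne', Matrix.smul_mul, trace_smul, smul_eq_mul,
          Complex.re_ofReal_mul]
    _ ≤ c ^ α * ((antiProj d).trace.re ^ (1 - (1 - α)) * s ^ (1 - α)) := by
        gcongr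
        exact re_trace_mul_matPow_le (antiProj_posSemidef d) hσ.1 (by linarith) (by linarith)
    _ = s ^ (1 - α) := by
        rw [hrank, sub_sub_cancel, Real.inv_rpow hc.le, ← mul_assoc,
          mul_inv_cancel₀ (by positivity), one_mul]
    _ ≤ (1 / 2) ^ (1 - α) := by
        gcongr
        exact re_trace_antiProj_mul_le_of_isSeparableState hsep
    _ ≤ (3 / 4 : ℝ) ^ ((1 - α) / 2) := half_rpow_le_three_quarters_rpow_half (by linarith)
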